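/- arXiv:1911.10456 — 4 statements merged into one kernel-verified Lean document; each statement's English description precedes it below -/
import Mathlib

section
/- Let q = p^m be a power of a prime p, let C₁,…,C_m be Hermitian self-dual linear codes of length n over F_{q²}, and let A be an m×m matrix over F_{q²} with A·Āᵀ = I_m. Then the matrix-product code C = [C₁,…,C_m]A, consisting of all vectors in F_{q²}^{nm} whose j-th block of length n equals ∑_{i=1}^m A_{ij} c_i for some choice of codewords c_i ∈ C_i (1 ≤ i ≤ m), is a Hermitian self-dual code of length nm. -/
open Matrix BigOperators Finset

/-- The Hermitian inner product `x * y = ∑ i, x i * (y i)^q` over `F_{q²}`. -/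
def hermInner (q : ℕ) {F : Type} [CommRing F] {ι : Type} [Fintype ι]
    (x y : ι → F) : F :=
  ∑ i, x i * y i ^ q

/-- The Hermitian dual of a set of vectors. -/
def hermDual (q : ℕ) {F : Type} [CommRing F] {ι : Type} [Fintype ι]
    (C : Set (ι → F)) : Set (ι → F) :=
  {y | ∀ x ∈ C, hermInner q x y = 0}

/-- The code generated by a matrix: the span of its rows. -/
def rowSpan {F : Type} [Field F] {k : ℕ} {ι : Type} (G : Matrix (Fin k) ι F) :
    Submodule F (ι → F) :=
  Submodule.span F (Set.range fun i => G i)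
/-- The matrix-product code `[C₁,…,C_m]A`: vectors of `F_{q²}^{nm}` (indexed by
block `j` and position `k`) whose `j`-th block equals `∑ i, A i j • c i` for some
codewords `c i ∈ C i`. -/
def matrixProdCode {F : Type} [Field F] {n k : ℕ}
    (A : Matrix (Fin k) (Fin k) F) (C : Fin k → Submodule F (Fin n → F)) :
    Set (Fin k × Fin n → F) :=
  {v | ∃ c : Fin k → (Fin n → F), (∀ i, c i ∈ C i) ∧
    ∀ jk : Fin k × Fin n, v jk = ∑ i, A i jk.1 * c i jk.2}

/-- Theorem 6 of the paper. If `C₁,…,C_k` are Hermitian self-dual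
codes of length `n` over `F_{q²}` and `A` is a `k×k` unitary matrix, then the
matrix-product code `[C₁,…,C_k]A` is Hermitian self-dual of length `nk`. -/
theorem stmt16 (p e q n k : ℕ) (hp : p.Prime) (he : 0 < e) (hq : q = p ^ e)
    (F : Type) [Field F] [Fintype F] (hF : Fintype.card F = q ^ 2)
    (C : Fin k → Submodule F (Fin n → F))
    (hC : ∀ i, (C i : Set (Fin n → F)) = hermDual q (C i))
    (A : Matrix (Fin k) (Fin k) F) (hA : A * (A.map (· ^ q))ᵀ = 1) :
    matrixProdCode A C = hermDual q (matrixProdCode A C) := by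
  classical
  haveI hp' : Fact p.Prime := ⟨hp⟩
  -- the characteristic of F is p
  haveI hchar : CharP F p := by
    have hr : (ringChar F).Prime := CharP.char_is_prime F _
    obtain ⟨nn, -, hcard⟩ := FiniteField.card F (ringChar F)
    have hdvd : p ∣ ringChar F ^ (nn : ℕ) := by
      rw [← hcard, hF, hq, ← pow_mul]
      exact dvd_pow_self p (by positivity)
    have : p = ringChar F :=
      (Nat.prime_dvd_prime_iff_eq hp hr).mp (hp.dvd_of_dvd_pow hdvd)
    rw [this]
    exact ringChar.charP F
  haveI : ExpChar F p := ExpChar.prime hp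
  -- x ↦ x ^ q is additive on sums
  have hsum : ∀ {ι : Type} [Fintype ι] (f : ι → F),
      (∑ t, f t) ^ q = ∑ t, f t ^ q := by
    intro ι _ f
    have h := map_sum (iterateFrobenius F p e) f Finset.univ
    simp only [iterateFrobenius_def] at h
    rw [hq]
    exact h
  -- orthonormality of the rows of A
  have hA' : ∀ i i' : Fin k, ∑ j, A i j * A i' j ^ q
      = if i = i' then (1 : F) else 0 := by
    intro i i'
    have := congrFun (congrFun hA i) i'
    simpa [Matrix.mul_apply, Matrix.one_apply, Matrix.transpose_apply,
      Matrix.map_apply] using this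
  have swap4 : ∀ (f : Fin k → Fin n → Fin k → Fin k → F),
      ∑ j, ∑ t, ∑ i, ∑ i', f j t i i' = ∑ i, ∑ i', ∑ j, ∑ t, f j t i i' := by
    intro f
    calc ∑ j, ∑ t, ∑ i, ∑ i', f j t i i'
        = ∑ j, ∑ i, ∑ t, ∑ i', f j t i i' :=
          Finset.sum_congr rfl fun j _ => Finset.sum_comm
      _ = ∑ i, ∑ j, ∑ t, ∑ i', f j t i i' := Finset.sum_comm
      _ = ∑ i, ∑ j, ∑ i', ∑ t, f j t i i' :=
          Finset.sum_congr rfl fun i _ => Finset.sum_congr rfl fun j _ =>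
            Finset.sum_comm
      _ = ∑ i, ∑ i', ∑ j, ∑ t, f j t i i' :=
          Finset.sum_congr rfl fun i _ => Finset.sum_comm
  -- the key isometry computation
  have key : ∀ c d : Fin k → Fin n → F,
      hermInner q (fun jk : Fin k × Fin n => ∑ i, A i jk.1 * c i jk.2)
        (fun jk : Fin k × Fin n => ∑ i, A i jk.1 * d i jk.2)
      = ∑ i, hermInner q (c i) (d i) := by
    intro c d
    unfold hermInner
    rw [Fintype.sum_prod_type]
    calc ∑ j, ∑ t, (∑ i, A i j * c i t) * (∑ i, A i j * d i t) ^ q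
        = ∑ j, ∑ t, ∑ i, ∑ i', (A i j * A i' j ^ q) * (c i t * d i' t ^ q) := by
          refine Finset.sum_congr rfl fun j _ => Finset.sum_congr rfl fun t _ => ?_
          rw [hsum, Finset.sum_mul_sum]
          refine Finset.sum_congr rfl fun i _ => Finset.sum_congr rfl fun i' _ => ?_
          rw [mul_pow]; ring
      _ = ∑ i, ∑ i', ∑ j, ∑ t, (A i j * A i' j ^ q) * (c i t * d i' t ^ q) :=
          swap4 _
      _ = ∑ i, ∑ i', (∑ j, A i j * A i' j ^ q) * (∑ t, c i t * d i' t ^ q) := by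
          refine Finset.sum_congr rfl fun i _ => Finset.sum_congr rfl fun i' _ => ?_
          rw [Finset.sum_mul_sum]
      _ = ∑ i, hermInner q (c i) (d i) := by
          simp only [hA', ite_mul, one_mul, zero_mul]
          simp [Finset.sum_ite_eq, hermInner]
  -- inverse of A on the other side
  have hBA : (A.map (· ^ q))ᵀ * A = 1 := mul_eq_one_comm.mp hA
  have hBA' : ∀ j j' : Fin k, ∑ i, A i j' ^ q * A i j
      = if j' = j then (1 : F) else 0 := by
    intro j j'
    have := congrFun (congrFun hBA j') j
    simpa [Matrix.mul_apply, Matrix.one_apply, Matrix.transpose_apply,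
      Matrix.map_apply] using this
  ext v
  constructor
  · -- code ⊆ dual
    rintro ⟨d, hd, hdv⟩ x ⟨c, hc, hcv⟩
    have hx : x = fun jk : Fin k × Fin n => ∑ i, A i jk.1 * c i jk.2 :=
      funext hcv
    have hv : v = fun jk : Fin k × Fin n => ∑ i, A i jk.1 * d i jk.2 :=
      funext hdv
    rw [hx, hv, key]
    refine Finset.sum_eq_zero fun i _ => ?_
    have hdmem : d i ∈ hermDual q (C i : Set (Fin n → F)) := by
      rw [← hC i]; exact hd i
    exact hdmem (c i) (hc i)
  · -- dual ⊆ code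
    intro hv
    set d : Fin k → Fin n → F := fun i t => ∑ j, A i j ^ q * v (j, t) with hd
    have hvd : ∀ jk : Fin k × Fin n, v jk = ∑ i, A i jk.1 * d i jk.2 := by
      rintro ⟨j, t⟩
      simp only [hd]
      calc v (j, t) = ∑ j', (if j' = j then (1 : F) else 0) * v (j', t) := by
            simp [Finset.sum_ite_eq]
        _ = ∑ j', (∑ i, A i j' ^ q * A i j) * v (j', t) := by
            refine Finset.sum_congr rfl fun j' _ => ?_
            rw [hBA' j j']
        _ = ∑ i, A i j * ∑ j', A i j' ^ q * v (j', t) := by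
            simp only [Finset.sum_mul, Finset.mul_sum]
            rw [Finset.sum_comm]
            refine Finset.sum_congr rfl fun j' _ =>
              Finset.sum_congr rfl fun i _ => ?_
            ring
    refine ⟨d, fun i => ?_, hvd⟩
    -- d i ∈ C i, using self-duality
    have : d i ∈ (C i : Set (Fin n → F)) := by
      rw [hC i]
      intro x hx
      -- build the codeword concentrated at block i
      set c : Fin k → Fin n → F := fun i' => if i' = i then x else 0 with hc
      have hcmem : ∀ i', c i' ∈ C i' := by
        intro i'
        by_cases h : i' = i
        · subst h; simpa [hc] using hx
        · simp [hc, h, Submodule.zero_mem]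
      have hcode : (fun jk : Fin k × Fin n => ∑ i, A i jk.1 * c i jk.2)
          ∈ matrixProdCode A C := ⟨c, hcmem, fun _ => rfl⟩
      have h0 := hv _ hcode
      have hv' : v = fun jk : Fin k × Fin n => ∑ i, A i jk.1 * d i jk.2 :=
        funext hvd
      rw [hv', key] at h0
      have hsingle : ∀ i' : Fin k, hermInner q (c i') (d i')
          = if i' = i then hermInner q x (d i) else 0 := by
        intro i'
        by_cases h : i' = i
        · subst h; simp [hc]
        · simp [hc, h, hermInner]
      rw [Finset.sum_congr rfl fun i' _ => hsingle i'] at h0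
      simpa [Finset.sum_ite_eq'] using h0
    exact this
end

section
/- Let q = p^m be a power of a prime p, let C₁,…,C_m be Hermitian self-dual linear codes of length n over F_{q²}, and let A be an m×m matrix over F_{q²} such that A·Āᵀ is the diagonal matrix diag(a₁^q,…,a_m^q) for some nonzero a₁,…,a_m ∈ F_{q²}. Then the matrix-product code C = [C₁,…,C_m]A, consisting of all vectors in F_{q²}^{nm} whose j-th block of length n equals ∑_{i=1}^m A_{ij} c_i for some choice of codewords c_i ∈ C_i (1 ≤ i ≤ m), is a Hermitian self-dual code of length nm. -/
open Matrix BigOperators Finset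

/-- Theorem 7 of the paper. If `C₁,…,C_k` are Hermitian self-dual
codes of length `n` over `F_{q²}` and `A` is a `k×k` matrix with
`A·Āᵀ = diag(a₁^q,…,a_k^q)` for nonzero `aᵢ`, then the matrix-product code
`[C₁,…,C_k]A` is Hermitian self-dual of length `nk`. -/
theorem stmt17 (p e q n k : ℕ) (hp : p.Prime) (he : 0 < e) (hq : q = p ^ e)
    (F : Type) [Field F] [Fintype F] (hF : Fintype.card F = q ^ 2)
    (C : Fin k → Submodule F (Fin n → F))
    (hC : ∀ i, (C i : Set (Fin n → F)) = hermDual q (C i))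
    (A : Matrix (Fin k) (Fin k) F)
    (a : Fin k → F) (ha : ∀ i, a i ≠ 0)
    (hA : A * (A.map (· ^ q))ᵀ = Matrix.diagonal fun i => a i ^ q) :
    matrixProdCode A C = hermDual q (matrixProdCode A C) := by
  haveI : Fact p.Prime := ⟨hp⟩
  haveI hcharF : CharP F p := by
    set r := ringChar F with hr
    haveI : CharP F r := ringChar.charP F
    have hrp : r.Prime := CharP.char_is_prime F r
    obtain ⟨n', -, hcard⟩ := FiniteField.card F r
    have h1 : p ∣ r ^ (n' : ℕ) := by
      rw [← hcard, hF, hq]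
      exact dvd_pow (dvd_pow_self p he.ne') two_ne_zero
    have h2 : p = r := (Nat.prime_dvd_prime_iff_eq hp hrp).mp (hp.dvd_of_dvd_pow h1)
    rw [h2]; infer_instance
  have hq0 : q ≠ 0 := by rw [hq]; exact pow_ne_zero _ hp.pos.ne'
  have frob_sum : ∀ {ι : Type} [Fintype ι] (f : ι → F),
      (∑ i, f i) ^ q = ∑ i, f i ^ q := by
    intro ι _ f
    rw [hq]
    exact sum_pow_char_pow p e _ _
  have frob2 : ∀ x : F, (x ^ q) ^ q = x := fun x => by
    rw [← pow_mul, show q * q = q ^ 2 by ring, ← hF, FiniteField.pow_card]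
  have split : ∀ (f : Fin k → F) (g : Fin n → F),
      (∑ jk : Fin k × Fin n, f jk.1 * g jk.2) = (∑ j, f j) * (∑ kk, g kk) := by
    intro f g
    rw [Finset.sum_mul_sum, Fintype.sum_prod_type]
  have keyA : ∀ i l, (∑ j, A i j * (A l j) ^ q) = if i = l then a i ^ q else 0 := by
    intro i l
    have h := congrFun (congrFun hA i) l
    rw [Matrix.mul_apply, Matrix.diagonal_apply] at h
    simpa [Matrix.transpose_apply, Matrix.map_apply] using h
  -- Forward inclusion: any two codewords are orthogonal.
  have inner_zero : ∀ x ∈ matrixProdCode A C, ∀ v ∈ matrixProdCode A C,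
      hermInner q x v = 0 := by
    rintro x ⟨c, hc, hxc⟩ v ⟨c', hc', hvc⟩
    have hcc : ∀ i, hermInner q (c i) (c' i) = 0 := by
      intro i
      have h : c' i ∈ hermDual q ((C i : Set (Fin n → F))) := by
        rw [← hC i]; exact hc' i
      exact h (c i) (hc i)
    calc hermInner q x v
        = ∑ jk : Fin k × Fin n, ∑ i, ∑ l,
            (A i jk.1 * (A l jk.1) ^ q) * (c i jk.2 * (c' l jk.2) ^ q) := by
          unfold hermInner
          refine Finset.sum_congr rfl fun jk _ => ?_
          rw [hxc jk, hvc jk, frob_sum, Finset.sum_mul_sum]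
          refine Finset.sum_congr rfl fun i _ => Finset.sum_congr rfl fun l _ => ?_
          rw [mul_pow]; ring
      _ = ∑ i, ∑ l, ∑ jk : Fin k × Fin n,
            (A i jk.1 * (A l jk.1) ^ q) * (c i jk.2 * (c' l jk.2) ^ q) := by
          rw [Finset.sum_comm]
          exact Finset.sum_congr rfl fun i _ => Finset.sum_comm
      _ = ∑ i, ∑ l, (∑ j, A i j * (A l j) ^ q) * (∑ kk, c i kk * (c' l kk) ^ q) := by
          refine Finset.sum_congr rfl fun i _ => Finset.sum_congr rfl fun l _ => ?_
          exact split (fun j => A i j * (A l j) ^ q) (fun kk => c i kk * (c' l kk) ^ q)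
      _ = ∑ i, ∑ l, (if i = l then a i ^ q else 0) * hermInner q (c i) (c' l) := by
          refine Finset.sum_congr rfl fun i _ => Finset.sum_congr rfl fun l _ => ?_
          rw [keyA]; rfl
      _ = 0 := by
          refine Finset.sum_eq_zero fun i _ => ?_
          simp [ite_mul, hcc i]
  apply Set.Subset.antisymm
  · intro v hv x hx
    exact inner_zero x hx v hv
  · intro w hw
    -- matrix identities
    have keyB : ∀ i l, (∑ j, (A i j) ^ q * A l j) = if i = l then a i else 0 := by
      intro i l
      have h : (∑ j, A i j * (A l j) ^ q) ^ q = (if i = l then a i ^ q else 0) ^ q := by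
        rw [keyA]
      rw [frob_sum] at h
      calc ∑ j, (A i j) ^ q * A l j
          = ∑ j, (A i j * (A l j) ^ q) ^ q := by
            refine Finset.sum_congr rfl fun j _ => ?_
            rw [mul_pow, frob2]
        _ = (if i = l then a i ^ q else 0) ^ q := h
        _ = if i = l then a i else 0 := by
            split_ifs
            · exact frob2 (a i)
            · exact zero_pow hq0
    have hBA : (A.map (· ^ q)) * Aᵀ = Matrix.diagonal a := by
      ext i l
      rw [Matrix.mul_apply, Matrix.diagonal_apply]
      simp only [Matrix.map_apply, Matrix.transpose_apply]
      exact keyB i l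
    have hED : (Matrix.diagonal fun i => (a i)⁻¹) * Matrix.diagonal a = 1 := by
      rw [Matrix.diagonal_mul_diagonal,
        show (fun i => (a i)⁻¹ * a i) = fun _ => (1 : F) from
          funext fun i => inv_mul_cancel₀ (ha i), Matrix.diagonal_one]
    have hinv : Aᵀ * ((Matrix.diagonal fun i => (a i)⁻¹) * A.map (· ^ q)) = 1 := by
      rw [mul_eq_one_comm, mul_assoc, hBA, hED]
    have keyinv : ∀ j j', (∑ i, A i j * ((a i)⁻¹ * (A i j') ^ q)) = if j = j' then 1 else 0 := by
      intro j j'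
      have h := congrFun (congrFun hinv j) j'
      rw [Matrix.mul_apply] at h
      simpa [Matrix.transpose_apply, Matrix.diagonal_mul, Matrix.map_apply,
        Matrix.one_apply] using h
    -- the blocks of the transformed word lie in the codes
    have hd : ∀ i, (fun kk => ∑ j, (A i j) ^ q * w (j, kk)) ∈ C i := by
      intro i
      rw [← SetLike.mem_coe, hC i]
      intro x hx
      have hv : (fun jk : Fin k × Fin n => A i jk.1 * x jk.2) ∈ matrixProdCode A C := by
        refine ⟨fun l => if l = i then x else 0, fun l => ?_, fun jk => ?_⟩
        · by_cases hl : l = i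
          · subst hl; simpa using hx
          · simp [hl]
        · simp [ite_apply, mul_ite, Finset.sum_ite_eq']
      have h0 := hw _ hv
      calc hermInner q x (fun kk => ∑ j, (A i j) ^ q * w (j, kk))
          = ∑ kk, ∑ j, x kk * (A i j * w (j, kk) ^ q) := by
            unfold hermInner
            refine Finset.sum_congr rfl fun kk _ => ?_
            rw [frob_sum, Finset.mul_sum]
            refine Finset.sum_congr rfl fun j _ => ?_
            rw [mul_pow, frob2]
        _ = ∑ jk : Fin k × Fin n, (A i jk.1 * x jk.2) * w jk ^ q := by
            rw [Fintype.sum_prod_type, Finset.sum_comm]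
            exact Finset.sum_congr rfl fun kk _ => Finset.sum_congr rfl fun j _ => by ring
        _ = 0 := h0
    refine ⟨fun i => (a i)⁻¹ • (fun kk => ∑ j, (A i j) ^ q * w (j, kk)),
      fun i => Submodule.smul_mem _ _ (hd i), ?_⟩
    rintro ⟨j, kk⟩
    show w (j, kk) = ∑ i, A i j * ((a i)⁻¹ * ∑ j', (A i j') ^ q * w (j', kk))
    have main : ∑ i, A i j * ((a i)⁻¹ * ∑ j', (A i j') ^ q * w (j', kk)) = w (j, kk) := by
      calc ∑ i, A i j * ((a i)⁻¹ * ∑ j', (A i j') ^ q * w (j', kk))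
          = ∑ i, ∑ j', A i j * ((a i)⁻¹ * ((A i j') ^ q * w (j', kk))) := by
            refine Finset.sum_congr rfl fun i _ => ?_
            rw [Finset.mul_sum, Finset.mul_sum]
        _ = ∑ j', ∑ i, A i j * ((a i)⁻¹ * ((A i j') ^ q * w (j', kk))) := Finset.sum_comm
        _ = ∑ j', (∑ i, A i j * ((a i)⁻¹ * (A i j') ^ q)) * w (j', kk) := by
            refine Finset.sum_congr rfl fun j' _ => ?_
            rw [Finset.sum_mul]
            exact Finset.sum_congr rfl fun i _ => by ring
        _ = ∑ j', (if j = j' then (1 : F) else 0) * w (j', kk) := by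
            refine Finset.sum_congr rfl fun j' _ => ?_
            rw [keyinv]
        _ = w (j, kk) := by simp
    exact main.symm
end

section
/- Let q = p^m be a power of a prime p, a ∈ F_{q²} with a^{q+1} = −1, L an n×n unitary matrix over F_{q²} with rows L₁,…,Lₙ, and λ₁,…,λₙ ∈ F_{q²}. For 1 ≤ i ≤ n let L'ᵢ = (aLᵢ, aλᵢ, λᵢ) ∈ F_{q²}^{n+2}. Suppose x ∈ F_{q²}^{n+2} is a nonzero vector satisfying x*x = 0 and L'ᵢ*x = 0 for all 1 ≤ i ≤ n. Then the code generated by the (n+1)×(2n+2) matrix G' whose i-th row (1 ≤ i ≤ n) is (eᵢ, aLᵢ, aλᵢ, λᵢ) (eᵢ the i-th standard basis vector of F_{q²}ⁿ) and whose last row is (0,…,0, x) (n zeros followed by x) is a Hermitian self-dual code of length 2n+2 and dimension n+1. -/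
open Matrix BigOperators Finset

/-!
Conjugation `y ↦ ȳ = y^q` is a field automorphism of `F_{q²}`, so the Hermitian dual of the row
space of a `k × N` matrix `G` is the conjugate of `ker G` and has `q^{2(N - rank G)}` elements.
The `n + 1` rows of `G'` are linearly independent and pairwise Hermitian-orthogonal, so the code
lies in its dual, and since `N = 2(n + 1)` both have `q^{2(n+1)}` elements.
-/

section HermitianForm

variable {F : Type} [Field F] {ι : Type} [Fintype ι] {q : ℕ}

theorem hermInner_add_left (x y z : ι → F) :
    hermInner q (x + y) z = hermInner q x z + hermInner q y z := by
  simp only [hermInner, Pi.add_apply, add_mul, sum_add_distrib]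

theorem hermInner_smul_left (c : F) (x y : ι → F) :
    hermInner q (c • x) y = c * hermInner q x y := by
  simp only [hermInner, Pi.smul_apply, smul_eq_mul, mul_sum, mul_assoc]

theorem hermInner_zero_left (y : ι → F) : hermInner q 0 y = 0 := by
  simp [hermInner]

theorem hermInner_zero_right (hq : q ≠ 0) (x : ι → F) : hermInner q x 0 = 0 := by
  simp [hermInner, zero_pow hq]

theorem hermInner_single_one (hq : q ≠ 0) [DecidableEq ι] (i j : ι) :
    hermInner q (Pi.single i 1 : ι → F) (Pi.single j 1) = (1 : Matrix ι ι F) i j := by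
  simp [hermInner, Pi.single_apply, one_apply, zero_pow hq, eq_comm]

theorem hermInner_sum_elim {κ : Type} [Fintype κ] (u₁ v₁ : ι → F) (u₂ v₂ : κ → F) :
    hermInner q (Sum.elim u₁ u₂) (Sum.elim v₁ v₂) = hermInner q u₁ v₁ + hermInner q u₂ v₂ :=
  Fintype.sum_sum_type _

theorem hermDual_span (S : Set (ι → F)) :
    hermDual q (Submodule.span F S : Set (ι → F)) = hermDual q S := by
  refine Set.Subset.antisymm (fun y hy x hx => hy x (Submodule.subset_span hx)) fun y hy x hx => ?_
  induction hx using Submodule.span_induction with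
  | mem x hx => exact hy x hx
  | zero => exact hermInner_zero_left y
  | add x z _ _ hx hz => rw [hermInner_add_left, hx, hz, add_zero]
  | smul c x _ hx => rw [hermInner_smul_left, hx, mul_zero]

end HermitianForm

section FiniteField

variable {F : Type} [Field F] [Fintype F] {q : ℕ}

theorem ne_zero_of_card_eq_sq (hF : Fintype.card F = q ^ 2) : q ≠ 0 := by
  rintro rfl
  exact Fintype.card_ne_zero (hF.trans (zero_pow two_ne_zero))

/-- Since `q ∣ |F|`, the exponent `q` is a power of the characteristic. -/
theorem add_pow_of_card_eq_sq (hF : Fintype.card F = q ^ 2) (u v : F) :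
    (u + v) ^ q = u ^ q + v ^ q := by
  obtain ⟨k, hp, hk⟩ := FiniteField.card F (ringChar F)
  have : Fact (ringChar F).Prime := ⟨hp⟩
  obtain ⟨i, -, rfl⟩ := (Nat.dvd_prime_pow hp).mp (hk ▸ hF ▸ dvd_pow_self q two_ne_zero)
  exact add_pow_char_pow u v _ i

theorem pow_pow_of_card_eq_sq (hF : Fintype.card F = q ^ 2) (u : F) : (u ^ q) ^ q = u := by
  rw [← pow_mul, ← sq, ← hF, FiniteField.pow_card]

variable {ι : Type} [Fintype ι]

theorem hermInner_swap (hF : Fintype.card F = q ^ 2) (x y : ι → F) :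
    hermInner q y x = hermInner q x y ^ q := by
  let conj : F →+* F := RingHom.mk' (powMonoidHom q) (add_pow_of_card_eq_sq hF)
  change _ = conj (∑ i, x i * y i ^ q)
  rw [map_sum]
  refine sum_congr rfl fun i _ => ?_
  change _ = (x i * y i ^ q) ^ q
  rw [mul_pow, pow_pow_of_card_eq_sq hF, mul_comm]

theorem span_subset_hermDual (hF : Fintype.card F = q ^ 2) {S : Set (ι → F)}
    (hS : ∀ x ∈ S, ∀ y ∈ S, hermInner q x y = 0) :
    (Submodule.span F S : Set (ι → F)) ⊆ hermDual q (Submodule.span F S) := by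
  intro y hy
  rw [hermDual_span]
  intro x hx
  have hx' : x ∈ hermDual q (Submodule.span F S : Set (ι → F)) := by
    rw [hermDual_span]
    exact fun z hz => hS z hz x hx
  rw [hermInner_swap hF, hx' y hy, zero_pow (ne_zero_of_card_eq_sq hF)]

theorem ncard_coe_submodule {V : Type} [AddCommGroup V] [Module F V] [Finite V]
    (C : Submodule F V) : (C : Set V).ncard = Fintype.card F ^ Module.finrank F C := by
  have : Fintype C := Fintype.ofFinite C
  rw [← Nat.card_coe_set_eq, SetLike.coe_sort_coe, Nat.card_eq_fintype_card,
    Module.card_eq_pow_finrank (K := F) (V := C)]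

/-- The Hermitian dual of the row space of `G` is the conjugate of the kernel of `G`. -/
theorem ncard_hermDual_rowSpan (hF : Fintype.card F = q ^ 2) {k : ℕ}
    (G : Matrix (Fin k) ι F) :
    (hermDual q (rowSpan G : Set (ι → F))).ncard =
      Fintype.card F ^ (Fintype.card ι - Module.finrank F (rowSpan G)) := by
  let conj : (ι → F) → ι → F := fun y i => y i ^ q
  have hconj : Function.Bijective conj :=
    Function.Involutive.bijective fun y => funext fun i => pow_pow_of_card_eq_sq hF (y i)
  have hdual : hermDual q (rowSpan G : Set (ι → F)) = conj ⁻¹' (LinearMap.ker G.mulVecLin) := by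
    ext y
    rw [rowSpan, hermDual_span]
    simp only [hermDual, Set.forall_mem_range, Set.mem_ofPred_eq, Set.mem_preimage,
      SetLike.mem_coe, LinearMap.mem_ker, mulVecLin_apply, funext_iff]
    rfl
  have hrank : Module.finrank F (LinearMap.range G.mulVecLin) = Module.finrank F (rowSpan G) :=
    G.rank_eq_finrank_span_row
  have hker := LinearMap.finrank_range_add_finrank_ker G.mulVecLin
  rw [Module.finrank_fintype_fun_eq_card, hrank] at hker
  rw [hdual, Set.ncard_preimage_of_injective_subset_range hconj.injective
    (hconj.surjective.range_eq ▸ Set.subset_univ _), ncard_coe_submodule]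
  congr 1
  omega

theorem rowSpan_eq_hermDual (hF : Fintype.card F = q ^ 2) {k : ℕ} (G : Matrix (Fin k) ι F)
    (horth : ∀ i j, hermInner q (G i) (G j) = 0)
    (hdim : Fintype.card ι = 2 * Module.finrank F (rowSpan G)) :
    (rowSpan G : Set (ι → F)) = hermDual q (rowSpan G) := by
  refine Set.eq_of_subset_of_ncard_le ?_ ?_ (Set.toFinite _)
  · exact span_subset_hermDual hF (by rintro _ ⟨i, rfl⟩ _ ⟨j, rfl⟩; exact horth i j)
  · rw [ncard_hermDual_rowSpan hF, ncard_coe_submodule, hdim]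
    exact le_of_eq (congrArg _ (by omega))

end FiniteField

section Construction

variable {F : Type} [Field F] {q n : ℕ}

/-- `⟨L'ᵢ, L'ⱼ⟩ = a^{q+1}(δᵢⱼ + λᵢλⱼ^q) + λᵢλⱼ^q`, and `a^{q+1} = -1` cancels the `λ`-terms. -/
theorem hermInner_extendedRow (a : F) (ha : a ^ (q + 1) = -1) (L : Matrix (Fin n) (Fin n) F)
    (hL : L * (L.map (· ^ q))ᵀ = 1) (lam : Fin n → F) (i j : Fin n) :
    hermInner q (Sum.elim (fun k => a * L i k) (Sum.elim (fun _ : Unit => a * lam i) fun _ : Unit => lam i))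
      (Sum.elim (fun k => a * L j k) (Sum.elim (fun _ : Unit => a * lam j) fun _ : Unit => lam j)) =
      -(1 : Matrix (Fin n) (Fin n) F) i j := by
  have hLij : ∑ k, L i k * L j k ^ q = (1 : Matrix (Fin n) (Fin n) F) i j := by
    simpa [mul_apply] using congr_fun (congr_fun hL i) j
  rw [hermInner_sum_elim, hermInner_sum_elim, ← hLij]
  simp only [hermInner, mul_pow, Fintype.univ_unit, sum_singleton]
  have hsum : ∑ k, a * L i k * (a ^ q * L j k ^ q) = a ^ (q + 1) * ∑ k, L i k * L j k ^ q := by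
    rw [mul_sum]
    exact sum_congr rfl fun k _ => by ring
  rw [hsum]
  linear_combination (∑ k, L i k * L j k ^ q + lam i * lam j ^ q) * ha

theorem linearIndependent_of_rows {κ : Type} (G : Matrix (Fin (n + 1)) (Fin n ⊕ κ) F)
    (v : Fin n → κ → F) (x : κ → F) (hx : x ≠ 0)
    (hrow : ∀ i, G i.castSucc = Sum.elim (Pi.single i 1) (v i))
    (hlast : G (Fin.last n) = Sum.elim (0 : Fin n → F) x) :
    LinearIndependent F fun i => G i := by
  rw [Fintype.linearIndependent_iff]
  intro g hg
  have hcast : ∀ i : Fin n, g i.castSucc = 0 := fun i => by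
    simpa [Fin.sum_univ_castSucc, hrow, hlast, Pi.single_apply] using congr_fun hg (Sum.inl i)
  have hlast' : g (Fin.last n) = 0 := by
    rw [Fin.sum_univ_castSucc] at hg
    simp only [hcast, zero_smul, sum_const_zero, zero_add, hlast] at hg
    refine (smul_eq_zero.mp hg).resolve_right fun h => hx ?_
    simpa using congr_arg (fun y => y ∘ Sum.inr) h
  exact Fin.lastCases hlast' hcast

end Construction

theorem stmt18_general (q n : ℕ)
    (F : Type) [Field F] [Fintype F] (hF : Fintype.card F = q ^ 2)
    (a : F) (ha : a ^ (q + 1) = -1)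
    (L : Matrix (Fin n) (Fin n) F) (hL : L * (L.map (· ^ q))ᵀ = 1)
    (lam : Fin n → F)
    (L' : Fin n → (Fin n ⊕ (Unit ⊕ Unit)) → F)
    (hL' : ∀ i, L' i = Sum.elim (fun k => a * L i k)
      (Sum.elim (fun _ => a * lam i) (fun _ => lam i)))
    (x : (Fin n ⊕ (Unit ⊕ Unit)) → F) (hx0 : x ≠ 0)
    (hxx : hermInner q x x = 0)
    (hLx : ∀ i, hermInner q (L' i) x = 0)
    (G' : Matrix (Fin (n + 1)) (Fin n ⊕ (Fin n ⊕ (Unit ⊕ Unit))) F)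
    (hG1 : ∀ i j : Fin n, G' i.castSucc (Sum.inl j) = if j = i then 1 else 0)
    (hG2 : ∀ (i : Fin n) (j : Fin n ⊕ (Unit ⊕ Unit)), G' i.castSucc (Sum.inr j) = L' i j)
    (hG3 : ∀ j : Fin n, G' (Fin.last n) (Sum.inl j) = 0)
    (hG4 : ∀ j, G' (Fin.last n) (Sum.inr j) = x j) :
    (rowSpan G' : Set (Fin n ⊕ (Fin n ⊕ (Unit ⊕ Unit)) → F)) = hermDual q (rowSpan G') ∧
    Module.finrank F (rowSpan G') = n + 1 := by
  have hq := ne_zero_of_card_eq_sq hF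
  have hrow (i : Fin n) : G' i.castSucc = Sum.elim (Pi.single i 1) (L' i) :=
    funext (Sum.rec (fun j => by simp [hG1, Pi.single_apply]) (hG2 i))
  have hlast : G' (Fin.last n) = Sum.elim (0 : Fin n → F) x := funext (Sum.rec hG3 hG4)
  have hdim : Module.finrank F (rowSpan G') = n + 1 := by
    rw [rowSpan, finrank_span_eq_card (linearIndependent_of_rows G' L' x hx0 hrow hlast),
      Fintype.card_fin]
  have horth (i j : Fin (n + 1)) : hermInner q (G' i) (G' j) = 0 := by
    induction i using Fin.lastCases <;> induction j using Fin.lastCases <;>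
      simp only [hrow, hlast, hermInner_sum_elim, hermInner_zero_left, hermInner_zero_right hq]
    · rw [hxx, add_zero]
    · rw [hermInner_swap hF, hLx, zero_pow hq, zero_add]
    · rw [hLx, add_zero]
    · rw [hL', hL', hermInner_extendedRow a ha L hL lam, hermInner_single_one hq, add_neg_cancel]
  refine ⟨rowSpan_eq_hermDual hF G' horth ?_, hdim⟩
  rw [hdim]
  simp only [Fintype.card_sum, Fintype.card_fin, Fintype.card_unit]
  ring

/-- Proposition 8 of the paper. Given `a^{q+1} = -1`, an `n×n`
unitary matrix `L`, scalars `λ₁,…,λₙ`, the extended rows `L'ᵢ = (aLᵢ, aλᵢ, λᵢ)`,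
and a nonzero `x ∈ F_{q²}^{n+2}` with `x*x = 0` and `L'ᵢ*x = 0` for all `i`,
the matrix `G'` with rows `(eᵢ, aLᵢ, aλᵢ, λᵢ)` and last row `(0,…,0, x)`
generates a Hermitian self-dual code of length `2n+2` and dimension `n+1`. -/
theorem stmt18 (p m q n : ℕ) (hp : p.Prime) (hm : 0 < m) (hq : q = p ^ m)
    (F : Type) [Field F] [Fintype F] (hF : Fintype.card F = q ^ 2)
    (a : F) (ha : a ^ (q + 1) = -1)
    (L : Matrix (Fin n) (Fin n) F) (hL : L * (L.map (· ^ q))ᵀ = 1)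
    (lam : Fin n → F)
    (L' : Fin n → (Fin n ⊕ (Unit ⊕ Unit)) → F)
    (hL' : ∀ i, L' i = Sum.elim (fun k => a * L i k)
      (Sum.elim (fun _ => a * lam i) (fun _ => lam i)))
    (x : (Fin n ⊕ (Unit ⊕ Unit)) → F) (hx0 : x ≠ 0)
    (hxx : hermInner q x x = 0)
    (hLx : ∀ i, hermInner q (L' i) x = 0)
    (G' : Matrix (Fin (n + 1)) (Fin n ⊕ (Fin n ⊕ (Unit ⊕ Unit))) F)
    (hG1 : ∀ i j : Fin n, G' i.castSucc (Sum.inl j) = if j = i then 1 else 0)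
    (hG2 : ∀ (i : Fin n) (j : Fin n ⊕ (Unit ⊕ Unit)), G' i.castSucc (Sum.inr j) = L' i j)
    (hG3 : ∀ j : Fin n, G' (Fin.last n) (Sum.inl j) = 0)
    (hG4 : ∀ j, G' (Fin.last n) (Sum.inr j) = x j) :
    (rowSpan G' : Set (Fin n ⊕ (Fin n ⊕ (Unit ⊕ Unit)) → F)) = hermDual q (rowSpan G') ∧
    Module.finrank F (rowSpan G') = n + 1 :=
  stmt18_general q n F hF a ha L hL lam L' hL' x hx0 hxx hLx G' hG1 hG2 hG3 hG4
end

section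
/- Let q = p^m be a power of a prime p and let C be a Hermitian self-orthogonal linear code of length 2n and F_{q²}-dimension n−1 over F_{q²}. Then there exists a Hermitian self-dual code C' of length 2n (thus of dimension n) with C ⊆ C' ⊆ C^{⊥H}. -/
/-!
Write `σ x = x ^ q`, the involutive Frobenius of `F_{q²}`, so that `x * y = ∑ xᵢ σ(yᵢ)`. Since `σ`
acts bijectively on coordinates, the Hermitian dual has the dimension of a Euclidean dual:
`dim C + dim C^⊥H = 2n`. So `C^⊥H / C` is a Hermitian plane, and every Hermitian plane over
`F_{q²}` has an isotropic vector because the norm `a ↦ a ^ (q + 1)` maps `F_{q²}` onto `F_q`.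
Adding an isotropic `v ∈ C^⊥H \ C` to `C` gives a self-orthogonal code of dimension `n`, and it
is self-dual by the dimension count.
-/

open Matrix BigOperators Finset

open Module Submodule

universe u v

theorem Module.finrank_eq_of_equiv_equiv {R R' : Type u} {M M' : Type v} [Ring R] [Ring R']
    [AddCommGroup M] [Module R M] [AddCommGroup M'] [Module R' M']
    (i : R → R') (j : M ≃+ M') (hi : Function.Bijective i)
    (hc : ∀ (r : R) (m : M), j (r • m) = i r • j m) :
    finrank R M = finrank R' M' :=
  congrArg Cardinal.toNat (rank_eq_of_equiv_equiv i j hi hc)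

theorem Submodule.finrank_comap_of_bijective {K V : Type*} [Field K] [AddCommGroup V]
    [Module K V] {σ : K →+* K} (hσ : Function.Bijective σ) {f : V →ₛₗ[σ] V}
    (hf : Function.Bijective f) (W : Submodule K V) :
    finrank K (W.comap f) = finrank K W := by
  let g : W.comap f →ₛₗ[σ] W := f.restrict fun _ hx => hx
  have hg : Function.Bijective g := by
    refine ⟨fun x y h => Subtype.ext (hf.1 (congrArg Subtype.val h)), fun ⟨y, hy⟩ => ?_⟩
    obtain ⟨x, rfl⟩ := hf.2 y
    exact ⟨⟨x, hy⟩, rfl⟩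
  exact finrank_eq_of_equiv_equiv σ (AddEquiv.ofBijective g hg) hσ (map_smulₛₗ g)

section Orthogonal

variable {K V V₂ : Type*} [Field K] [AddCommGroup V] [Module K V] [AddCommGroup V₂]
  [Module K V₂] {J : K →+* K} {B : V →ₗ[K] V →ₛₗ[J] V₂}

theorem Submodule.orthogonalBilin_sup (S T : Submodule K V) :
    (S ⊔ T).orthogonalBilin B = S.orthogonalBilin B ⊓ T.orthogonalBilin B := by
  refine le_antisymm (le_inf (orthogonalBilin_le le_sup_left) (orthogonalBilin_le le_sup_right))
    fun y ⟨hS, hT⟩ x hx => ?_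
  obtain ⟨s, hs, t, ht, rfl⟩ := mem_sup.mp hx
  rw [map_add, LinearMap.add_apply, hS s hs, hT t ht, add_zero]

theorem Submodule.sup_span_singleton_le_orthogonalBilin (hB : B.IsRefl) {C : Submodule K V}
    (hC : C ≤ C.orthogonalBilin B) {v : V} (hv : v ∈ C.orthogonalBilin B) (hvv : B v v = 0) :
    C ⊔ K ∙ v ≤ (C ⊔ K ∙ v).orthogonalBilin B := by
  rw [orthogonalBilin_sup, LinearMap.orthogonal_span_singleton_eq_to_lin_ker]
  refine sup_le (le_inf hC fun x hx => hB x v (hv x hx)) ?_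
  rw [span_singleton_le_iff_mem]
  exact ⟨hv, hvv⟩

end Orthogonal

theorem finrank_add_finrank_orthogonalBilin_dotProduct {F ι : Type*} [Field F] [Fintype ι]
    [DecidableEq ι] (S : Submodule F (ι → F)) :
    finrank F S + finrank F (S.orthogonalBilin (dotProductBilin F F)) = Fintype.card ι := by
  have : S.orthogonalBilin (dotProductBilin F F) =
      (S.map (dotProductEquiv F ι).toLinearMap).dualCoannihilator := by
    ext y
    simp only [mem_orthogonalBilin_iff, mem_dualCoannihilator]
    exact ⟨fun h _ ⟨x, hx, hφ⟩ => hφ ▸ h x hx, fun h x hx => h _ ⟨x, hx, rfl⟩⟩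
  rw [this, ← LinearEquiv.finrank_map_eq (dotProductEquiv F ι),
    Subspace.finrank_add_finrank_dualCoannihilator_eq, finrank_pi]

section HermForm

variable {F : Type*} [Field F] {ι : Type*} {σ : F →+* F}

theorem exists_hermitian_binary_form_eq_zero (hσ : Function.Involutive σ)
    (hnorm : ∀ c, σ c = c → ∃ a, a * σ a = c) {t : F} (ht₀ : t ≠ 0) (ht : σ t = t) (s : F)
    {r : F} (hr : σ r = r) : ∃ a, a * σ a * t + a * s + σ a * σ s + r = 0 := by
  obtain ⟨α, hα⟩ := hnorm ((s * σ s / t - r) / t) (by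
    simp only [map_div₀, map_sub, map_mul, hσ s, ht, hr]; ring)
  -- completing the square: at `a = α - σ s / t` the form equals `t * α * σ α - s * σ s / t + r`
  refine ⟨α - σ s / t, ?_⟩
  simp only [map_sub, map_div₀, hσ s, ht]
  field_simp at hα ⊢
  linear_combination hα

variable (σ) in
def coordwise : (ι → F) →ₛₗ[σ] (ι → F) where
  toFun y i := σ (y i)
  map_add' _ _ := funext fun _ => map_add σ _ _
  map_smul' _ _ := funext fun _ => map_mul σ _ _

theorem coordwise_involutive (hσ : Function.Involutive σ) :
    Function.Involutive (coordwise (ι := ι) σ) :=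
  fun y => funext fun i => hσ (y i)

variable [Fintype ι]

variable (σ) in
def hermForm : (ι → F) →ₗ[F] (ι → F) →ₛₗ[σ] F :=
  (dotProductBilin F F).compl₂ (coordwise σ)

theorem hermForm_apply (x y : ι → F) : hermForm σ x y = ∑ i, x i * σ (y i) := rfl

theorem hermForm_swap (hσ : Function.Involutive σ) (x y : ι → F) :
    σ (hermForm σ x y) = hermForm σ y x := by
  simp [hermForm_apply, map_sum, hσ _, mul_comm]

theorem hermForm_isRefl (hσ : Function.Involutive σ) : (hermForm (ι := ι) σ).IsRefl :=
  fun x y h => by rw [← hermForm_swap hσ, h, map_zero]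

theorem hermForm_smul_add_self (hσ : Function.Involutive σ) (a : F) (u w : ι → F) :
    hermForm σ (a • u + w) (a • u + w) =
      a * σ a * hermForm σ u u + a * hermForm σ u w + σ a * σ (hermForm σ u w) +
        hermForm σ w w := by
  simp only [map_add, map_smulₛₗ, LinearMap.add_apply, LinearMap.smul_apply, smul_eq_mul,
    RingHom.id_apply, hermForm_swap hσ]
  ring

theorem orthogonalBilin_hermForm (S : Submodule F (ι → F)) :
    S.orthogonalBilin (hermForm σ) =
      (S.orthogonalBilin (dotProductBilin F F)).comap (coordwise σ) :=
  rfl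

theorem finrank_add_finrank_orthogonalBilin_hermForm (hσ : Function.Involutive σ)
    (S : Submodule F (ι → F)) :
    finrank F S + finrank F (S.orthogonalBilin (hermForm σ)) = Fintype.card ι := by
  classical
  rw [orthogonalBilin_hermForm,
    finrank_comap_of_bijective hσ.bijective (coordwise_involutive hσ).bijective,
    finrank_add_finrank_orthogonalBilin_dotProduct]

theorem exists_isotropic_smul_add (hσ : Function.Involutive σ)
    (hnorm : ∀ c, σ c = c → ∃ a, a * σ a = c) {u : ι → F} (hu : hermForm σ u u ≠ 0)
    (w : ι → F) : ∃ a : F, hermForm σ (a • u + w) (a • u + w) = 0 := by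
  obtain ⟨a, ha⟩ := exists_hermitian_binary_form_eq_zero hσ hnorm hu (hermForm_swap hσ u u)
    (hermForm σ u w) (hermForm_swap hσ w w)
  exact ⟨a, by rw [hermForm_smul_add_self hσ, ha]⟩

theorem exists_isotropic_mem_orthogonalBilin_notMem (hσ : Function.Involutive σ)
    (hnorm : ∀ c, σ c = c → ∃ a, a * σ a = c) {C : Submodule F (ι → F)}
    (hC : C ≤ C.orthogonalBilin (hermForm σ))
    (hdim : finrank F C + 2 ≤ finrank F (C.orthogonalBilin (hermForm σ))) :
    ∃ v ∈ C.orthogonalBilin (hermForm σ), v ∉ C ∧ hermForm σ v v = 0 := by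
  set D := C.orthogonalBilin (hermForm σ)
  obtain ⟨u, huD, huC⟩ := SetLike.exists_of_lt (lt_of_le_of_finrank_lt_finrank hC (by omega))
  by_cases hu : hermForm σ u u = 0
  · exact ⟨u, huD, huC, hu⟩
  have hCu : C ⊔ F ∙ u < D := by
    refine lt_of_le_of_finrank_lt_finrank (sup_le hC ((span_singleton_le_iff_mem _ _).mpr huD)) ?_
    rw [finrank_sup_span_singleton huC]
    omega
  obtain ⟨w, hwD, hwCu⟩ := SetLike.exists_of_lt hCu
  obtain ⟨a, ha⟩ := exists_isotropic_smul_add hσ hnorm hu w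
  refine ⟨a • u + w, D.add_mem (D.smul_mem a huD) hwD, fun hv => hwCu ?_, ha⟩
  rw [← add_sub_cancel_left (a • u) w]
  exact sub_mem (mem_sup_left hv) (mem_sup_right (smul_mem _ a (mem_span_singleton_self u)))

theorem exists_orthogonalBilin_eq_self_of_le (hσ : Function.Involutive σ)
    (hnorm : ∀ c, σ c = c → ∃ a, a * σ a = c) {C : Submodule F (ι → F)}
    (hC : C ≤ C.orthogonalBilin (hermForm σ)) (hdim : 2 * finrank F C + 2 = Fintype.card ι) :
    ∃ C' : Submodule F (ι → F), C'.orthogonalBilin (hermForm σ) = C' ∧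
      finrank F C' = finrank F C + 1 ∧ C ≤ C' := by
  obtain ⟨v, hvD, hvC, hvv⟩ := exists_isotropic_mem_orthogonalBilin_notMem hσ hnorm hC
    (by have := finrank_add_finrank_orthogonalBilin_hermForm hσ C; omega)
  have hrank := finrank_sup_span_singleton hvC
  refine ⟨C ⊔ F ∙ v, (eq_of_le_of_finrank_eq
    (sup_span_singleton_le_orthogonalBilin (hermForm_isRefl hσ) hC hvD hvv) ?_).symm,
    hrank, le_sup_left⟩
  have := finrank_add_finrank_orthogonalBilin_hermForm hσ (C ⊔ F ∙ v)
  omega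

end HermForm

theorem IsCyclic.exists_pow_eq_of_pow_eq_one {G : Type*} [Group G] [IsCyclic G] [Finite G]
    {a b : ℕ} (hG : Nat.card G = a * b) {x : G} (hx : x ^ b = 1) : ∃ y : G, y ^ a = x := by
  obtain ⟨g, hg⟩ := IsCyclic.exists_generator (α := G)
  obtain ⟨k, rfl⟩ := (Submonoid.mem_powers_iff x g).mp (mem_powers_iff_mem_zpowers.mpr (hg x))
  have hb : 0 < b := Nat.pos_of_ne_zero fun h => Nat.card_pos.ne' (by rw [hG, h, mul_zero])
  have hdvd : a * b ∣ k * b := by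
    rw [← hG, ← orderOf_eq_card_of_forall_mem_zpowers hg]
    exact orderOf_dvd_of_pow_eq_one (by rw [pow_mul, hx])
  obtain ⟨l, rfl⟩ := Nat.dvd_of_mul_dvd_mul_right hb hdvd
  exact ⟨g ^ l, by rw [← pow_mul, mul_comm]⟩

theorem FiniteField.exists_pow_add_one_eq {F : Type*} [Field F] [Fintype F] {q : ℕ}
    (hF : Fintype.card F = q ^ 2) {c : F} (hc : c ^ q = c) : ∃ a : F, a ^ (q + 1) = c := by
  rcases eq_or_ne c 0 with rfl | hc₀
  · exact ⟨0, zero_pow q.succ_ne_zero⟩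
  have hq : 2 ≤ q := by
    have := hF ▸ Fintype.one_lt_card (α := F)
    by_contra! h
    interval_cases q <;> simp at this
  have hcq : (Units.mk0 c hc₀) ^ (q - 1) = 1 := Units.ext <| by
    simp [pow_sub₀ c hc₀ (by omega : 1 ≤ q), hc, hc₀]
  have hcard : Nat.card Fˣ = (q + 1) * (q - 1) := by
    classical
    rw [Nat.card_eq_fintype_card, Fintype.card_units, hF, ← Nat.sq_sub_sq, one_pow]
  obtain ⟨a, ha⟩ := IsCyclic.exists_pow_eq_of_pow_eq_one hcard hcq
  exact ⟨a, by rw [← Units.val_pow_eq_pow_val, ha, Units.val_mk0]⟩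

theorem stmt19_general (p m q n : ℕ) (hp : p.Prime) (hq : q = p ^ m)
    (hn : 1 ≤ n)
    (F : Type) [Field F] [Fintype F] (hF : Fintype.card F = q ^ 2)
    (C : Submodule F (Fin (2 * n) → F))
    (hso : (C : Set (Fin (2 * n) → F)) ⊆ hermDual q (C : Set (Fin (2 * n) → F)))
    (hdim : Module.finrank F C = n - 1) :
    ∃ C' : Submodule F (Fin (2 * n) → F),
      (C' : Set (Fin (2 * n) → F)) = hermDual q (C' : Set (Fin (2 * n) → F)) ∧
      Module.finrank F C' = n ∧
      (C : Set (Fin (2 * n) → F)) ⊆ (C' : Set (Fin (2 * n) → F)) ∧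
      (C' : Set (Fin (2 * n) → F)) ⊆ hermDual q (C : Set (Fin (2 * n) → F)) := by
  subst hq
  have := Fact.mk hp
  have := charP_of_card_eq_prime_pow (by rw [hF, ← pow_mul] : Fintype.card F = p ^ (m * 2))
  let σ := iterateFrobenius F p m
  have hσ : Function.Involutive σ := fun x => by
    rw [iterateFrobenius_def, iterateFrobenius_def, ← pow_mul, ← sq, ← hF, FiniteField.pow_card]
  have hnorm (c : F) (hc : σ c = c) : ∃ a, a * σ a = c := by
    obtain ⟨a, ha⟩ := FiniteField.exists_pow_add_one_eq hF hc
    exact ⟨a, by rw [iterateFrobenius_def, ← pow_succ', ha]⟩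
  have hdual (S : Submodule F (Fin (2 * n) → F)) :
      hermDual (p ^ m) (S : Set (Fin (2 * n) → F)) = S.orthogonalBilin (hermForm σ) := rfl
  simp only [hdual, SetLike.coe_subset_coe, SetLike.coe_set_eq] at hso ⊢
  obtain ⟨C', hC', hrank, hCC'⟩ := exists_orthogonalBilin_eq_self_of_le hσ hnorm hso
    (by rw [hdim, Fintype.card_fin]; omega)
  exact ⟨C', hC'.symm, by omega, hCC', hC' ▸ orthogonalBilin_le hCC'⟩

/-- Corollary 4 of the paper. If `C` is a Hermitian self-orthogonal
code of length `2n` and dimension `n - 1` over `F_{q²}`, then there exists a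
Hermitian self-dual code `C'` of length `2n` (of dimension `n`) with
`C ⊆ C' ⊆ C^{⊥H}`. -/
theorem stmt19 (p m q n : ℕ) (hp : p.Prime) (hm : 0 < m) (hq : q = p ^ m)
    (hn : 1 ≤ n)
    (F : Type) [Field F] [Fintype F] (hF : Fintype.card F = q ^ 2)
    (C : Submodule F (Fin (2 * n) → F))
    (hso : (C : Set (Fin (2 * n) → F)) ⊆ hermDual q (C : Set (Fin (2 * n) → F)))
    (hdim : Module.finrank F C = n - 1) :
    ∃ C' : Submodule F (Fin (2 * n) → F),
      (C' : Set (Fin (2 * n) → F)) = hermDual q (C' : Set (Fin (2 * n) → F)) ∧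
      Module.finrank F C' = n ∧
      (C : Set (Fin (2 * n) → F)) ⊆ (C' : Set (Fin (2 * n) → F)) ∧
      (C' : Set (Fin (2 * n) → F)) ⊆ hermDual q (C : Set (Fin (2 * n) → F)) :=
  stmt19_general p m q n hp hq hn F hF C hso hdim
end
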